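/- arXiv:1312.0170 — 3 statements merged into one kernel-verified Lean document; each statement's English description precedes it below -/
import Mathlib

section
/- Let Z be a locally compact metric space and let {U'_0, …, U'_n} be an open cover of Z. Then for every m ≥ n there exists a family {U_0, …, U_m} of open subsets of Z which is an (n+1)-cover of Z, such that U_k = U'_k for all k ≤ n, and for each k > n the set U_k is a disjoint union U_k = V_0 ∪ … ∪ V_n of open sets with V_i ⊆ U'_i for each i. -/
/-- A family `U` of subsets of `X` indexed by `ι` is a `k`-cover of `X` if every
subfamily of `k` of its members covers `X`. -/
def IsNCover {X ι : Type*} (k : ℕ) (U : ι → Set X) : Prop :=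
  ∀ S : Finset ι, S.card = k → ∀ x : X, ∃ i ∈ S, x ∈ U i

/-!
Choose continuous `f i` with `U' i = {x | 0 < f i x}`, which is possible in any perfectly normal
space. For `k > n`, let `U k` be the set of points `x` at which `i ↦ k ^ i * f i x` has a unique
maximizer; the pieces `V i` on which that maximizer is `i` are open, disjoint and contained in
`U' i`. If exactly `t` of the values `f i x` are positive, then `x` lies outside `n + 1 - t` of
the sets `U 0, …, U n` and outside at most `t - 1` of the others: the maximizers of `r ^ i * c i`
move up as `r` grows, so along the values `r = k` with a tie the least maximizer strictly
increases, and it always stays below the largest `i` with `c i > 0`.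
-/

open Finset

theorem le_of_pow_mul_le_pow_mul {r₁ r₂ a b : ℝ} {i j : ℕ} (hr₁ : 0 < r₁) (hr : r₁ < r₂)
    (hb : 0 < b) (h₁ : r₁ ^ j * b ≤ r₁ ^ i * a) (h₂ : r₂ ^ i * a ≤ r₂ ^ j * b) : i ≤ j := by
  by_contra! hji
  obtain ⟨d, rfl⟩ := Nat.exists_eq_add_of_lt hji
  have hpow : r₁ ^ (d + 1) < r₂ ^ (d + 1) := pow_lt_pow_left₀ hr hr₁.le d.succ_ne_zero
  have hr₂ : 0 < r₂ := hr₁.trans hr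
  have key : (r₁ ^ j * r₂ ^ j * b) * r₂ ^ (d + 1) ≤ (r₁ ^ j * r₂ ^ j * b) * r₁ ^ (d + 1) :=
    calc (r₁ ^ j * r₂ ^ j * b) * r₂ ^ (d + 1) = r₂ ^ (j + d + 1) * (r₁ ^ j * b) := by ring
      _ ≤ r₂ ^ (j + d + 1) * (r₁ ^ (j + d + 1) * a) := by gcongr
      _ = r₁ ^ (j + d + 1) * (r₂ ^ (j + d + 1) * a) := by ring
      _ ≤ r₁ ^ (j + d + 1) * (r₂ ^ j * b) := by gcongr
      _ = (r₁ ^ j * r₂ ^ j * b) * r₁ ^ (d + 1) := by ring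
  exact hpow.not_ge (le_of_mul_le_mul_left key (by positivity))

section Maximizers

variable {n : ℕ}

noncomputable def maximizers (r : ℝ) (c : Fin (n + 1) → ℝ) : Finset (Fin (n + 1)) :=
  {i | ∀ j : Fin (n + 1), r ^ (j : ℕ) * c j ≤ r ^ (i : ℕ) * c i}

theorem mem_maximizers {r : ℝ} {c : Fin (n + 1) → ℝ} {i : Fin (n + 1)} :
    i ∈ maximizers r c ↔ ∀ j : Fin (n + 1), r ^ (j : ℕ) * c j ≤ r ^ (i : ℕ) * c i := by
  simp [maximizers]

theorem maximizers_nonempty (r : ℝ) (c : Fin (n + 1) → ℝ) : (maximizers r c).Nonempty := by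
  obtain ⟨i, -, hi⟩ := exists_max_image univ (fun i : Fin (n + 1) => r ^ (i : ℕ) * c i)
    univ_nonempty
  exact ⟨i, mem_maximizers.2 fun j => hi j (mem_univ j)⟩

theorem pos_of_mem_maximizers {r : ℝ} {c : Fin (n + 1) → ℝ} {i₀ i : Fin (n + 1)} (hr : 0 < r)
    (hc : 0 < c i₀) (hi : i ∈ maximizers r c) : 0 < c i :=
  pos_of_mul_pos_right
    ((by positivity : 0 < r ^ (i₀ : ℕ) * c i₀).trans_le (mem_maximizers.1 hi i₀))
    (by positivity)

theorem max'_maximizers_le_min'_maximizers {r₁ r₂ : ℝ} {c : Fin (n + 1) → ℝ} {i₀ : Fin (n + 1)}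
    (hr₁ : 0 < r₁) (hr : r₁ < r₂) (hc : 0 < c i₀) :
    (maximizers r₁ c).max' (maximizers_nonempty r₁ c) ≤
      (maximizers r₂ c).min' (maximizers_nonempty r₂ c) := by
  have hi := (maximizers r₁ c).max'_mem (maximizers_nonempty r₁ c)
  have hj := (maximizers r₂ c).min'_mem (maximizers_nonempty r₂ c)
  have hcj := pos_of_mem_maximizers (hr₁.trans hr) hc hj
  exact Fin.le_iff_val_le_val.2
    (le_of_pow_mul_le_pow_mul hr₁ hr hcj (mem_maximizers.1 hi _) (mem_maximizers.1 hj _))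

theorem card_lt_of_one_lt_card_maximizers {ι : Type*} [LinearOrder ι] {r : ι → ℝ}
    (hr : StrictMono r) {c : Fin (n + 1) → ℝ} {i₀ : Fin (n + 1)} (hc : 0 < c i₀) {K : Finset ι}
    (hpos : ∀ k ∈ K, 0 < r k) (hK : ∀ k ∈ K, 1 < #(maximizers (r k) c)) :
    #K < #{i | 0 < c i} := by
  set P : Finset (Fin (n + 1)) := {i | 0 < c i}
  have hP : P.Nonempty := ⟨i₀, by simpa [P] using hc⟩
  set μ : ι → Fin (n + 1) := fun k => (maximizers (r k) c).min' (maximizers_nonempty _ c)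
  have hμ_lt_max : ∀ k ∈ K, μ k < (maximizers (r k) c).max' (maximizers_nonempty _ c) :=
    fun k hk => min'_lt_max'_of_card _ (hK k hk)
  have hμ_mono : StrictMonoOn μ K := fun k₁ hk₁ k₂ hk₂ hlt =>
    (hμ_lt_max k₁ hk₁).trans_le
      (max'_maximizers_le_min'_maximizers (hpos k₁ hk₁) (hr hlt) hc)
  have hmaps : Set.MapsTo μ K (P.erase (P.max' hP)) := by
    intro k hk
    have hmem : ∀ i ∈ maximizers (r k) c, i ∈ P := fun i hi => by
      simpa [P] using pos_of_mem_maximizers (hpos k hk) hc hi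
    refine mem_erase.2 ⟨(?_ : μ k < P.max' hP).ne, hmem _ (min'_mem _ _)⟩
    exact (hμ_lt_max k hk).trans_le (P.le_max' _ (hmem _ (max'_mem _ _)))
  have := card_le_card_of_injOn μ hmaps hμ_mono.injOn
  rw [card_erase_of_mem (P.max'_mem hP)] at this
  have := hP.card_pos
  omega

end Maximizers

open Classical in
theorem isNCover_of_card_notMem_lt {X ι : Type*} [Fintype ι] {k : ℕ} {U : ι → Set X}
    (h : ∀ x, #{i | x ∉ U i} < k) : IsNCover k U := by
  intro S hS x
  by_contra! hS_miss
  have := card_le_card (s := S) (t := {i | x ∉ U i}) fun i hi => by simpa using hS_miss i hi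
  have := h x
  omega

theorem exists_continuous_pos_iff_mem {X : Type*} [TopologicalSpace X] [PerfectlyNormalSpace X]
    {U : Set X} (hU : IsOpen U) : ∃ f : C(X, ℝ), ∀ x, 0 < f x ↔ x ∈ U := by
  obtain ⟨f, hf_zero, hf_mem⟩ :=
    perfectlyNormalSpace_iff_forall_isClosed_preimage_zero.1 ‹_› Uᶜ hU.isClosed_compl
  refine ⟨f, fun x => ?_⟩
  rw [(hf_mem x).1.lt_iff_ne', ← not_iff_not, not_not, ← Set.mem_compl_iff, hf_zero]
  rfl

section UniqueArgmax

variable {Z : Type*} {n : ℕ} (f : Fin (n + 1) → Z → ℝ) (r : ℝ)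

def uniqueArgmaxSet (i : Fin (n + 1)) : Set Z :=
  {x | ∀ j ≠ i, r ^ (j : ℕ) * f j x < r ^ (i : ℕ) * f i x}

variable {f r}

theorem isOpen_uniqueArgmaxSet [TopologicalSpace Z] (hf : ∀ i, Continuous (f i))
    (i : Fin (n + 1)) : IsOpen (uniqueArgmaxSet f r i) := by
  simp only [uniqueArgmaxSet, Set.ofPred_forall]
  exact isOpen_iInter_of_finite fun j => isOpen_iInter_of_finite fun _ =>
    isOpen_lt (by fun_prop) (by fun_prop)

theorem pairwise_disjoint_uniqueArgmaxSet :
    Pairwise (Function.onFun Disjoint (uniqueArgmaxSet f r)) := by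
  intro i j hij
  refine Set.disjoint_left.2 fun x hi hj => ?_
  exact (hi j hij.symm).not_gt (hj i hij)

theorem mem_maximizers_of_mem_uniqueArgmaxSet {i : Fin (n + 1)} {x : Z}
    (hx : x ∈ uniqueArgmaxSet f r i) : i ∈ maximizers r (f · x) := by
  refine mem_maximizers.2 fun j => ?_
  rcases eq_or_ne j i with rfl | hji
  · exact le_rfl
  · exact (hx j hji).le

theorem one_lt_card_maximizers_of_notMem_iUnion {x : Z}
    (hx : x ∉ ⋃ i, uniqueArgmaxSet f r i) : 1 < #(maximizers r (f · x)) := by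
  obtain ⟨i, hi⟩ := maximizers_nonempty r (f · x)
  obtain ⟨j, hji, hj⟩ : ∃ j ≠ i, r ^ (i : ℕ) * f i x ≤ r ^ (j : ℕ) * f j x := by
    simpa [uniqueArgmaxSet] using fun h => hx (Set.mem_iUnion.2 ⟨i, h⟩)
  refine one_lt_card.2 ⟨i, hi, j, mem_maximizers.2 fun l => ?_, hji.symm⟩
  exact (mem_maximizers.1 hi l).trans hj

theorem uniqueArgmaxSet_subset {U' : Fin (n + 1) → Set Z} (hr : 0 < r)
    (hf : ∀ i x, 0 < f i x ↔ x ∈ U' i) (hcover : ⋃ i, U' i = Set.univ) (i : Fin (n + 1)) :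
    uniqueArgmaxSet f r i ⊆ U' i := by
  intro x hx
  obtain ⟨i₀, hi₀⟩ := Set.iUnion_eq_univ_iff.1 hcover x
  exact (hf i x).1
    (pos_of_mem_maximizers hr ((hf i₀ x).2 hi₀) (mem_maximizers_of_mem_uniqueArgmaxSet hx))

end UniqueArgmax

section Extension

variable {Z : Type*} {n : ℕ}

def extendedFamily (U' : Fin (n + 1) → Set Z) (f : Fin (n + 1) → Z → ℝ) (m : ℕ)
    (k : Fin (m + 1)) : Set Z :=
  if hk : (k : ℕ) ≤ n then U' ⟨k, Nat.lt_succ_of_le hk⟩ else ⋃ i, uniqueArgmaxSet f k i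

variable {U' : Fin (n + 1) → Set Z} {f : Fin (n + 1) → Z → ℝ} {m : ℕ} {k : Fin (m + 1)}

theorem extendedFamily_of_le (hk : (k : ℕ) ≤ n) :
    extendedFamily U' f m k = U' ⟨k, Nat.lt_succ_of_le hk⟩ :=
  dif_pos hk

theorem extendedFamily_of_lt (hk : n < (k : ℕ)) :
    extendedFamily U' f m k = ⋃ i, uniqueArgmaxSet f k i :=
  dif_neg hk.not_ge

theorem isOpen_extendedFamily [TopologicalSpace Z] (hopen : ∀ i, IsOpen (U' i))
    (hf : ∀ i, Continuous (f i)) (k : Fin (m + 1)) : IsOpen (extendedFamily U' f m k) := by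
  rcases le_or_gt (k : ℕ) n with hk | hk
  · rw [extendedFamily_of_le hk]
    exact hopen _
  · rw [extendedFamily_of_lt hk]
    exact isOpen_iUnion (isOpen_uniqueArgmaxSet hf)

open Classical in
theorem card_notMem_extendedFamily_lt (hf : ∀ i x, 0 < f i x ↔ x ∈ U' i)
    (hcover : ⋃ i, U' i = Set.univ) (x : Z) :
    #{k | x ∉ extendedFamily U' f m k} < n + 1 := by
  obtain ⟨i₀, hi₀⟩ := Set.iUnion_eq_univ_iff.1 hcover x
  set low : Finset (Fin (m + 1)) := {k | (k : ℕ) ≤ n ∧ x ∉ extendedFamily U' f m k}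
  set high : Finset (Fin (m + 1)) := {k | n < (k : ℕ) ∧ x ∉ extendedFamily U' f m k}
  have hlow : #low ≤ #{i | ¬0 < f i x} := by
    refine card_le_card_of_surjOn (fun i : Fin (n + 1) => Fin.ofNat (m + 1) i) ?_
    intro k hk
    simp only [low, coe_filter, mem_univ, true_and, Set.mem_ofPred_eq] at hk
    obtain ⟨hkn, hkx⟩ := hk
    rw [extendedFamily_of_le hkn] at hkx
    refine ⟨⟨k, Nat.lt_succ_of_le hkn⟩, by simpa [hf] using hkx, Fin.ext ?_⟩
    simp
  have hhigh : #high < #{i | 0 < f i x} := by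
    refine card_lt_of_one_lt_card_maximizers (r := fun k : Fin (m + 1) => ((k : ℕ) : ℝ))
      (fun k₁ k₂ h => by simpa using h) ((hf i₀ x).2 hi₀) (fun k hk => ?_) (fun k hk => ?_)
    · simp only [high, mem_filter] at hk
      exact Nat.cast_pos.2 (by omega)
    · simp only [high, mem_filter, mem_univ, true_and] at hk
      exact one_lt_card_maximizers_of_notMem_iUnion (extendedFamily_of_lt hk.1 ▸ hk.2)
  have hsplit : ({k | x ∉ extendedFamily U' f m k} : Finset (Fin (m + 1))) ⊆ low ∪ high := by
    intro k hk
    rw [mem_filter] at hk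
    rcases le_or_gt (k : ℕ) n with h | h
    · exact mem_union_left _ (by simp [low, h, hk.2])
    · exact mem_union_right _ (by simp [high, h, hk.2])
  have hP := card_filter_add_card_filter_not (s := univ) (fun i : Fin (n + 1) => 0 < f i x)
  rw [card_univ, Fintype.card_fin] at hP
  have := (card_le_card hsplit).trans (card_union_le _ _)
  omega

end Extension

theorem exists_nCover_extension_general {Z : Type*} [MetricSpace Z]
    (n : ℕ) (U' : Fin (n + 1) → Set Z)
    (hopen : ∀ i, IsOpen (U' i)) (hcover : ⋃ i, U' i = Set.univ)
    (m : ℕ) :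
    ∃ U : Fin (m + 1) → Set Z,
      (∀ k, IsOpen (U k)) ∧
      IsNCover (n + 1) U ∧
      (∀ (k : Fin (m + 1)) (hk : (k : ℕ) ≤ n), U k = U' ⟨k, Nat.lt_succ_of_le hk⟩) ∧
      (∀ k : Fin (m + 1), n < (k : ℕ) →
        ∃ V : Fin (n + 1) → Set Z,
          (∀ i, IsOpen (V i)) ∧
          Pairwise (Function.onFun Disjoint V) ∧
          (∀ i, V i ⊆ U' i) ∧
          U k = ⋃ i, V i) := by
  choose f hf using fun i => exists_continuous_pos_iff_mem (hopen i)
  have hf_cont (i : Fin (n + 1)) : Continuous (f i) := (f i).continuous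
  refine ⟨extendedFamily U' (f ·) m, isOpen_extendedFamily hopen hf_cont,
    isNCover_of_card_notMem_lt (card_notMem_extendedFamily_lt hf hcover),
    fun k hk => extendedFamily_of_le hk, fun k hk => ?_⟩
  exact ⟨_, isOpen_uniqueArgmaxSet hf_cont, pairwise_disjoint_uniqueArgmaxSet,
    uniqueArgmaxSet_subset (Nat.cast_pos.2 (by omega)) hf hcover, extendedFamily_of_lt hk⟩

/-- Let `Z` be a locally compact metric space and `U'_0, …, U'_n` an open cover of `Z`.
Then for every `m ≥ n` there is an `(n+1)`-cover `U_0, …, U_m` of `Z` by open sets with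
`U_k = U'_k` for `k ≤ n` and, for `k > n`, `U_k` a disjoint union of open sets
`V_0 ∪ … ∪ V_n` with `V_i ⊆ U'_i`. -/
theorem exists_nCover_extension {Z : Type*} [MetricSpace Z] [LocallyCompactSpace Z]
    (n : ℕ) (U' : Fin (n + 1) → Set Z)
    (hopen : ∀ i, IsOpen (U' i)) (hcover : ⋃ i, U' i = Set.univ)
    (m : ℕ) (hm : n ≤ m) :
    ∃ U : Fin (m + 1) → Set Z,
      (∀ k, IsOpen (U k)) ∧
      IsNCover (n + 1) U ∧
      (∀ (k : Fin (m + 1)) (hk : (k : ℕ) ≤ n), U k = U' ⟨k, Nat.lt_succ_of_le hk⟩) ∧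
      (∀ k : Fin (m + 1), n < (k : ℕ) →
        ∃ V : Fin (n + 1) → Set Z,
          (∀ i, IsOpen (V i)) ∧
          Pairwise (Function.onFun Disjoint V) ∧
          (∀ i, V i ⊆ U' i) ∧
          U k = ⋃ i, V i) :=
  exists_nCover_extension_general n U' hopen hcover m
end

section
/- Let Z be a locally compact metric space, Δ ⊆ Z a subset, and let {U'_0, …, U'_n} be an open cover of Z such that each U'_i is deformable to Δ. Then for every m ≥ n there exists a family {U_0, …, U_m} of open subsets of Z which is an (n+1)-cover of Z, such that U_k = U'_k for all k ≤ n, each U_k with k > n is a disjoint union of open subsets V_0 ∪ … ∪ V_n with V_i ⊆ U'_i, and every member U_k of the new family is deformable to Δ. -/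
/-- A subset `U ⊆ Z` is deformable to `Δ ⊆ Z` if there is a homotopy `h_t : U → Z`
with `h_0` the inclusion and `h_1(U) ⊆ Δ`. -/
def DeformableTo {Z : Type*} [TopologicalSpace Z] (U Δ : Set Z) : Prop :=
  ∃ H : C(unitInterval × ↥U, Z),
    (∀ u : ↥U, H (0, u) = (u : Z)) ∧ (∀ u : ↥U, H (1, u) ∈ Δ)

/-!
Take a partition of unity `f₀, …, fₙ` subordinate to the `U'ᵢ` and distinct levels
`c_k ∈ (0, 1/(n+1))`. For `k > n`, `U_k` is the set of points where some `fᵢ` exceeds `c_k`, split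
according to the first such `i`: the pieces are disjoint open subsets of the `U'ᵢ`, so the
deformations of the `U'ᵢ` glue to one of `U_k`. A point missed by `U_k` is a zero of `f_k` if
`k ≤ n`, and lies on a level set `{f_j = c_k}` otherwise. Since the levels are distinct, a point
missed by `n + 1` members would have `n + 1` of the `f_j` below `1/(n+1)`, although they sum to `1`.
-/

open Set Topology

theorem DeformableTo.mono {Z : Type*} [TopologicalSpace Z] {U V Δ : Set Z}
    (h : DeformableTo U Δ) (hVU : V ⊆ U) : DeformableTo V Δ := by
  obtain ⟨H, h0, h1⟩ := h
  exact ⟨H.comp ((ContinuousMap.id _).prodMap (ContinuousMap.inclusion hVU)),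
    fun v => h0 (inclusion hVU v), fun v => h1 (inclusion hVU v)⟩

theorem deformableTo_iUnion {Z ι : Type*} [TopologicalSpace Z] {Δ : Set Z} {V : ι → Set Z}
    (hV : ∀ i, IsOpen (V i)) (hdisj : Pairwise (Function.onFun Disjoint V))
    (hdef : ∀ i, DeformableTo (V i) Δ) : DeformableTo (⋃ i, V i) Δ := by
  choose H h0 h1 using hdef
  let S : ι → Set (unitInterval × ↥(⋃ i, V i)) := fun i => univ ×ˢ (Subtype.val ⁻¹' V i)
  let φ : ∀ i, C(S i, Z) := fun i =>
    (H i).comp ⟨fun p => (p.1.1, ⟨p.1.2, p.2.2⟩), by fun_prop⟩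
  have hφ : ∀ i j x (hxi : x ∈ S i) (hxj : x ∈ S j), φ i ⟨x, hxi⟩ = φ j ⟨x, hxj⟩ := by
    intro i j x hxi hxj
    obtain rfl : i = j := hdisj.eq (not_disjoint_iff.mpr ⟨_, hxi.2, hxj.2⟩)
    rfl
  have hS : ∀ x, ∃ i, S i ∈ 𝓝 x := fun x =>
    (mem_iUnion.mp x.2.2).imp fun i hi =>
      (isOpen_univ.prod ((hV i).preimage continuous_subtype_val)).mem_nhds ⟨trivial, hi⟩
  let G := ContinuousMap.liftCover S φ hφ hS
  have hG : ∀ t (u : ↥(⋃ i, V i)) i (hi : (u : Z) ∈ V i), G (t, u) = H i (t, ⟨u, hi⟩) :=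
    fun t u i hi => ContinuousMap.liftCover_coe (S := S) (x := ⟨(t, u), trivial, hi⟩)
  refine ⟨G, fun u => ?_, fun u => ?_⟩ <;> obtain ⟨i, hi⟩ := mem_iUnion.mp u.2 <;> rw [hG _ u i hi]
  exacts [h0 i _, h1 i _]

section FirstAbove

variable {X ι : Type*} [TopologicalSpace X] [LinearOrder ι] (f : ι → C(X, ℝ)) (c : ℝ)

def firstAboveSet (i : ι) : Set X :=
  {x | c < f i x} ∩ ⋂ j < i, {x | f j x < c}

theorem isOpen_firstAboveSet [Finite ι] (i : ι) : IsOpen (firstAboveSet f c i) :=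
  (isOpen_lt continuous_const (f i).continuous).inter <| isOpen_iInter_of_finite fun j =>
    isOpen_iInter_of_finite fun _ => isOpen_lt (f j).continuous continuous_const

theorem pairwise_disjoint_firstAboveSet :
    Pairwise (Function.onFun Disjoint (firstAboveSet f c)) := by
  intro i j hij
  wlog hlt : i < j generalizing i j
  · exact (this hij.symm (hij.symm.lt_of_le (not_lt.mp hlt))).symm
  exact disjoint_left.mpr fun x hi hj =>
    lt_asymm (mem_iInter₂.mp hj.2 i hlt) (show c < f i x from hi.1)

theorem exists_eq_of_notMem_iUnion_firstAboveSet [WellFoundedLT ι] {x : X}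
    (hx : x ∉ ⋃ i, firstAboveSet f c i) (hc : ∃ i, c < f i x) : ∃ j, f j x = c := by
  obtain ⟨i, hi, hmin⟩ := wellFounded_lt.has_min {i | c < f i x} hc
  by_contra! hne
  exact hx (mem_iUnion.mpr ⟨i, hi, mem_iInter₂.mpr fun j hj =>
    (not_lt.mp fun h => hmin j h hj).lt_of_ne (hne j)⟩)

end FirstAbove

namespace PartitionOfUnity

variable {X ι : Type*} [TopologicalSpace X]

theorem exists_inv_card_le [Fintype ι] [Nonempty ι] (f : PartitionOfUnity ι X) (x : X) :
    ∃ i, (Fintype.card ι : ℝ)⁻¹ ≤ f i x := by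
  have hsum : ∑ i, f i x = 1 := by
    rw [← finsum_eq_sum_of_fintype]
    exact f.sum_eq_one (mem_univ x)
  obtain ⟨i, -, hi⟩ := Finset.exists_le_of_sum_le Finset.univ_nonempty
    (f := fun _ => (Fintype.card ι : ℝ)⁻¹) (g := fun i => f i x) (by simp [hsum])
  exact ⟨i, hi⟩

variable {f : PartitionOfUnity ι X} {U : ι → Set X}

theorem IsSubordinate.eq_zero_of_notMem (hf : f.IsSubordinate U) {i : ι} {x : X}
    (hx : x ∉ U i) : f i x = 0 :=
  by_contra fun h => hx (hf i (subset_tsupport _ h))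

theorem IsSubordinate.firstAboveSet_subset [LinearOrder ι] (hf : f.IsSubordinate U) {c : ℝ}
    (hc : 0 ≤ c) (i : ι) : firstAboveSet (⇑f) c i ⊆ U i := fun _ hx =>
  by_contra fun hxU => (hc.trans_lt hx.1).ne' (hf.eq_zero_of_notMem hxU)

end PartitionOfUnity

section ExtendedCover

variable {Z : Type*} [TopologicalSpace Z] {n m : ℕ} (U' : Fin (n + 1) → Set Z)
  (f : PartitionOfUnity (Fin (n + 1)) Z) (c : Fin (m + 1) ↪ Ioo (0 : ℝ) (n + 1)⁻¹)

def extendedCover (k : Fin (m + 1)) : Set Z :=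
  if hk : (k : ℕ) ≤ n then U' ⟨k, Nat.lt_succ_of_le hk⟩ else ⋃ i, firstAboveSet (⇑f) (c k) i

theorem isOpen_extendedCover (hopen : ∀ i, IsOpen (U' i)) (k : Fin (m + 1)) :
    IsOpen (extendedCover U' f c k) := by
  unfold extendedCover
  split_ifs
  exacts [hopen _, isOpen_iUnion fun i => isOpen_firstAboveSet _ _ i]

theorem deformableTo_extendedCover {Δ : Set Z} (hf : f.IsSubordinate U')
    (hdef : ∀ i, DeformableTo (U' i) Δ) (k : Fin (m + 1)) :
    DeformableTo (extendedCover U' f c k) Δ := by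
  unfold extendedCover
  split_ifs
  · exact hdef _
  · exact deformableTo_iUnion (isOpen_firstAboveSet _ _) (pairwise_disjoint_firstAboveSet _ _)
      fun i => (hdef i).mono (hf.firstAboveSet_subset (c k).2.1.le i)

theorem exists_level_of_notMem_extendedCover (hf : f.IsSubordinate U') {k : Fin (m + 1)} {x : Z}
    (hx : x ∉ extendedCover U' f c k) :
    ∃ j : Fin (n + 1), ((k : ℕ) = j ∧ f j x = 0) ∨ f j x = c k := by
  by_cases hk : (k : ℕ) ≤ n
  · rw [extendedCover, dif_pos hk] at hx
    exact ⟨_, .inl ⟨rfl, hf.eq_zero_of_notMem hx⟩⟩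
  · rw [extendedCover, dif_neg hk] at hx
    obtain ⟨i, hi⟩ := f.exists_inv_card_le x
    have hci : (c k : ℝ) < f i x := (c k).2.2.trans_le (by simpa using hi)
    exact (exists_eq_of_notMem_iUnion_firstAboveSet _ _ hx ⟨i, hci⟩).imp fun _ => .inr

theorem isNCover_extendedCover (hf : f.IsSubordinate U') :
    IsNCover (n + 1) (extendedCover U' f c) := by
  intro S hS x
  by_contra! hx
  obtain ⟨i₀, hi₀⟩ := f.exists_inv_card_le x
  replace hi₀ : ((n : ℝ) + 1)⁻¹ ≤ f i₀ x := by simpa using hi₀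
  let small := Finset.univ.filter fun j : Fin (n + 1) => f j x < ((n : ℝ) + 1)⁻¹
  have hsmall : small.card < n + 1 := by
    simpa using Finset.card_lt_card (Finset.filter_ssubset.mpr
      ⟨i₀, Finset.mem_univ _, hi₀.not_gt⟩)
  have hSsmall : S.card ≤ small.card := by
    refine Finset.card_le_card_of_forall_subsingleton
      (fun (k : Fin (m + 1)) (j : Fin (n + 1)) => ((k : ℕ) = j ∧ f j x = 0) ∨ f j x = c k)
      (fun k hk => ?_) ?_
    · obtain ⟨j, hj⟩ := exists_level_of_notMem_extendedCover U' f c hf (hx k hk)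
      refine ⟨j, Finset.mem_filter.mpr ⟨Finset.mem_univ _, ?_⟩, hj⟩
      rcases hj with ⟨-, hj⟩ | hj <;> rw [hj]
      exacts [by positivity, (c k).2.2]
    · rintro j - k₁ ⟨-, h₁⟩ k₂ ⟨-, h₂⟩
      rcases h₁ with ⟨e₁, z₁⟩ | v₁ <;> rcases h₂ with ⟨e₂, z₂⟩ | v₂
      · exact Fin.ext (e₁.trans e₂.symm)
      · exact absurd (v₂.symm.trans z₁) (c k₂).2.1.ne'
      · exact absurd (v₁.symm.trans z₂) (c k₁).2.1.ne'
      · exact c.injective (Subtype.ext (v₁.symm.trans v₂))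
  omega

end ExtendedCover

theorem exists_deformable_nCover_extension_general {Z : Type*} [MetricSpace Z]
    (Δ : Set Z)
    (n : ℕ) (U' : Fin (n + 1) → Set Z)
    (hopen : ∀ i, IsOpen (U' i)) (hcover : ⋃ i, U' i = Set.univ)
    (hdef : ∀ i, DeformableTo (U' i) Δ)
    (m : ℕ) :
    ∃ U : Fin (m + 1) → Set Z,
      (∀ k, IsOpen (U k)) ∧
      IsNCover (n + 1) U ∧
      (∀ (k : Fin (m + 1)) (hk : (k : ℕ) ≤ n), U k = U' ⟨k, Nat.lt_succ_of_le hk⟩) ∧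
      (∀ k : Fin (m + 1), n < (k : ℕ) →
        ∃ V : Fin (n + 1) → Set Z,
          (∀ i, IsOpen (V i)) ∧
          Pairwise (Function.onFun Disjoint V) ∧
          (∀ i, V i ⊆ U' i) ∧
          U k = ⋃ i, V i) ∧
      (∀ k, DeformableTo (U k) Δ) := by
  obtain ⟨f, hf⟩ :=
    PartitionOfUnity.exists_isSubordinate isClosed_univ U' hopen hcover.superset
  let c : Fin (m + 1) ↪ Ioo (0 : ℝ) (n + 1)⁻¹ :=
    Fin.valEmbedding.trans (Set.Ioo_infinite (by positivity)).natEmbedding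
  refine ⟨extendedCover U' f c, isOpen_extendedCover U' f c hopen,
    isNCover_extendedCover U' f c hf, fun k hk => dif_pos hk, fun k hk => ?_,
    deformableTo_extendedCover U' f c hf hdef⟩
  exact ⟨firstAboveSet (⇑f) (c k), isOpen_firstAboveSet _ _, pairwise_disjoint_firstAboveSet _ _,
    hf.firstAboveSet_subset (c k).2.1.le, dif_neg hk.not_ge⟩

/-- Let `Z` be a locally compact metric space, `Δ ⊆ Z`, and `U'_0, …, U'_n` an open cover
of `Z` by sets deformable to `Δ`. Then for every `m ≥ n` there is an `(n+1)`-cover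
`U_0, …, U_m` of `Z` by open sets deformable to `Δ`, with `U_k = U'_k` for `k ≤ n` and,
for `k > n`, `U_k` a disjoint union of open sets `V_0 ∪ … ∪ V_n` with `V_i ⊆ U'_i`. -/
theorem exists_deformable_nCover_extension {Z : Type*} [MetricSpace Z]
    [LocallyCompactSpace Z] (Δ : Set Z)
    (n : ℕ) (U' : Fin (n + 1) → Set Z)
    (hopen : ∀ i, IsOpen (U' i)) (hcover : ⋃ i, U' i = Set.univ)
    (hdef : ∀ i, DeformableTo (U' i) Δ)
    (m : ℕ) (hm : n ≤ m) :
    ∃ U : Fin (m + 1) → Set Z,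
      (∀ k, IsOpen (U k)) ∧
      IsNCover (n + 1) U ∧
      (∀ (k : Fin (m + 1)) (hk : (k : ℕ) ≤ n), U k = U' ⟨k, Nat.lt_succ_of_le hk⟩) ∧
      (∀ k : Fin (m + 1), n < (k : ℕ) →
        ∃ V : Fin (n + 1) → Set Z,
          (∀ i, IsOpen (V i)) ∧
          Pairwise (Function.onFun Disjoint V) ∧
          (∀ i, V i ⊆ U' i) ∧
          U k = ⋃ i, V i) ∧
      (∀ k, DeformableTo (U k) Δ) :=
  exists_deformable_nCover_extension_general Δ n U' hopen hcover hdef m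
end

section
/- Let X be a metric space, A a subset of X, and 𝒱' = {V'_i}_{i∈J} a cover of A by sets open in A. Then 𝒱' can be extended to a family 𝒱 = {V_i}_{i∈J} of sets open in X covering A, with the same nerve as 𝒱' (i.e., for every finite subset S ⊆ J the intersection ⋂_{i∈S} V_i is nonempty if and only if ⋂_{i∈S} V'_i is nonempty) and such that V_i ∩ A = V'_i for all i ∈ J. -/
/-!
Choose radii `ρ i a > 0` with `B(a, ρ i a) ∩ A ⊆ V'_i`, and let `V_i` be the union of the balls
`B(a, ρ i a / 2)`, `a ∈ V'_i`. Two such half-balls around `a ∈ V'_i` and `b ∈ V'_j` can only meet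
if `d(a, b) < ρ i a / 2 + ρ j b / 2`; so if finitely many of them share a point, the centre with the
smallest radius lies in the full ball around every other centre, hence in every `V'_j`.
-/

open Metric Set

section HalfBallUnion

variable {X : Type*} [PseudoMetricSpace X]

def halfBallUnion (U : Set X) (ρ : X → ℝ) : Set X :=
  ⋃ a ∈ U, ball a (ρ a / 2)

theorem isOpen_halfBallUnion (U : Set X) (ρ : X → ℝ) : IsOpen (halfBallUnion U ρ) :=
  isOpen_biUnion fun _ _ => isOpen_ball

theorem subset_halfBallUnion {U : Set X} {ρ : X → ℝ} (hρ : ∀ a ∈ U, 0 < ρ a) :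
    U ⊆ halfBallUnion U ρ :=
  fun a ha => mem_biUnion ha (mem_ball_self (half_pos (hρ a ha)))

theorem halfBallUnion_inter_subset {U A : Set X} {ρ : X → ℝ}
    (hball : ∀ a ∈ U, ball a (ρ a) ∩ A ⊆ U) : halfBallUnion U ρ ∩ A ⊆ U := by
  rintro x ⟨hx, hxA⟩
  obtain ⟨a, ha, hxa⟩ := mem_iUnion₂.mp hx
  have hxa : dist x a < ρ a / 2 := hxa
  have hxa' : dist x a < ρ a := by linarith [dist_nonneg (x := x) (y := a)]
  exact hball a ha ⟨hxa', hxA⟩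

theorem nonempty_biInter_of_nonempty_biInter_halfBallUnion {J : Type*} {A : Set X}
    {U : J → Set X} {ρ : J → X → ℝ} (hUA : ∀ i, U i ⊆ A)
    (hball : ∀ i, ∀ a ∈ U i, ball a (ρ i a) ∩ A ⊆ U i) {S : Finset J}
    (h : (⋂ i ∈ S, halfBallUnion (U i) (ρ i)).Nonempty) : (⋂ i ∈ S, U i).Nonempty := by
  obtain ⟨x, hx⟩ := h
  rcases S.eq_empty_or_nonempty with rfl | hS
  · exact ⟨x, by simp⟩
  have hcentre : ∀ i ∈ S, ∃ a ∈ U i, dist x a < ρ i a / 2 := fun i hi =>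
    let ⟨a, ha, hxa⟩ := mem_iUnion₂.mp (mem_iInter₂.mp hx i hi)
    ⟨a, ha, hxa⟩
  have : Nonempty X := ⟨x⟩
  choose! c hcU hcx using hcentre
  obtain ⟨i₀, hi₀, hmin⟩ := S.exists_min_image (fun i => ρ i (c i)) hS
  refine ⟨c i₀, mem_iInter₂.mpr fun j hj => hball j (c j) (hcU j hj) ⟨?_, hUA i₀ (hcU i₀ hi₀)⟩⟩
  calc dist (c i₀) (c j) ≤ dist x (c i₀) + dist x (c j) := dist_triangle_left _ _ _
    _ < ρ i₀ (c i₀) / 2 + ρ j (c j) / 2 := add_lt_add (hcx i₀ hi₀) (hcx j hj)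
    _ ≤ ρ j (c j) := by linarith [hmin j hj]

end HalfBallUnion

theorem exists_radius_ball_inter_subset {X J : Type*} [PseudoMetricSpace X] {A : Set X}
    {V' : J → Set X} (hopen : ∀ i, ∃ W : Set X, IsOpen W ∧ V' i = W ∩ A) :
    ∃ ρ : J → X → ℝ, ∀ i, ∀ a ∈ V' i, 0 < ρ i a ∧ ball a (ρ i a) ∩ A ⊆ V' i := by
  choose W hW hWA using hopen
  choose! ε hε hεW using fun i => Metric.isOpen_iff.mp (hW i)
  refine ⟨ε, fun i a ha => ?_⟩
  rw [hWA] at ha ⊢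
  exact ⟨hε i a ha.1, inter_subset_inter_left A (hεW i a ha.1)⟩

theorem exists_open_extension_same_nerve_general {X : Type*} [MetricSpace X] (A : Set X)
    {J : Type*} (V' : J → Set X)
    (hopen : ∀ i, ∃ W : Set X, IsOpen W ∧ V' i = W ∩ A)
    (hcover : A ⊆ ⋃ i, V' i) :
    ∃ V : J → Set X,
      (∀ i, IsOpen (V i)) ∧
      A ⊆ ⋃ i, V i ∧
      (∀ i, V i ∩ A = V' i) ∧
      (∀ S : Finset J, (⋂ i ∈ S, V i).Nonempty ↔ (⋂ i ∈ S, V' i).Nonempty) := by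
  obtain ⟨ρ, hρ⟩ := exists_radius_ball_inter_subset hopen
  have hsub : ∀ i, V' i ⊆ A := fun i => by
    obtain ⟨W, -, hWA⟩ := hopen i
    exact hWA ▸ inter_subset_right
  have hext : ∀ i, V' i ⊆ halfBallUnion (V' i) (ρ i) :=
    fun i => subset_halfBallUnion fun a ha => (hρ i a ha).1
  have hball : ∀ i, ∀ a ∈ V' i, ball a (ρ i a) ∩ A ⊆ V' i := fun i a ha => (hρ i a ha).2
  refine ⟨fun i => halfBallUnion (V' i) (ρ i), fun i => isOpen_halfBallUnion _ _,
    hcover.trans (iUnion_mono hext), fun i => ?_, fun S => ⟨?_, ?_⟩⟩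
  · exact (halfBallUnion_inter_subset (hball i)).antisymm (subset_inter (hext i) (hsub i))
  · exact nonempty_biInter_of_nonempty_biInter_halfBallUnion hsub hball
  · exact Nonempty.mono (biInter_mono subset_rfl fun i _ => hext i)

/-- Let `X` be a metric space, `A ⊆ X`, and `𝒱' = {V'_i}_{i ∈ J}` a cover of `A` by sets
open in `A`. Then `𝒱'` extends to a family `𝒱 = {V_i}_{i ∈ J}` of sets open in `X`
covering `A`, with the same nerve (for every finite `S ⊆ J`, `⋂_{i ∈ S} V_i ≠ ∅` iff
`⋂_{i ∈ S} V'_i ≠ ∅`) and with `V_i ∩ A = V'_i` for all `i`. -/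
theorem exists_open_extension_same_nerve {X : Type*} [MetricSpace X] (A : Set X)
    {J : Type*} (V' : J → Set X)
    (hsub : ∀ i, V' i ⊆ A)
    (hopen : ∀ i, ∃ W : Set X, IsOpen W ∧ V' i = W ∩ A)
    (hcover : A ⊆ ⋃ i, V' i) :
    ∃ V : J → Set X,
      (∀ i, IsOpen (V i)) ∧
      A ⊆ ⋃ i, V i ∧
      (∀ i, V i ∩ A = V' i) ∧
      (∀ S : Finset J, (⋂ i ∈ S, V i).Nonempty ↔ (⋂ i ∈ S, V' i).Nonempty) :=
  exists_open_extension_same_nerve_general A V' hopen hcover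
end
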